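/- arXiv:math/0501512 — 5 statements merged into one kernel-verified Lean document; each statement's English description precedes it below -/
import Mathlib

section
/- For the λ-ring ℤ with all Adams operations equal to the identity, the group of λ-derivations (functions f : ℕ⁺ → ℤ with f(p) ∈ pℤ for every prime p and f(mn) = f(m) + f(n) for all m, n ≥ 1) modulo λ-inner derivations (which are all zero) is isomorphic to the product ∏_p pℤ over all primes p, via f ↦ (f(p))_p. Equivalently, H¹_λ(ℤ) ≅ ∏_p ℤ. -/
/-! By unique factorisation, `ℕ+` under multiplication is the free commutative monoid on the
primes (`PNat.factorMultiset`). Hence a function with `f (m * n) = f m + f n` is the sum of its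
values over the prime factors counted with multiplicity, and any choice of values at the primes
extends this way; so restricting to the primes is a bijection. Finally `pℤ ≃ ℤ` by `y ↦ p * y`. -/

theorem map_multiset_prod_of_map_mul_eq_add {N M : Type*} [CommMonoid N] [AddCancelCommMonoid M]
    {f : N → M} (hf : ∀ m n, f (m * n) = f m + f n) (s : Multiset N) :
    f s.prod = (s.map f).sum := by
  induction s using Multiset.induction_on with
  | empty => simpa using hf 1 1
  | cons a s ih => simp [hf, ih]

namespace PNat

variable {M : Type*}

noncomputable def sumPrimeFactors [AddCommMonoid M] (g : Nat.Primes → M) (n : ℕ+) : M :=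
  (n.factorMultiset.map g).sum

theorem sumPrimeFactors_mul [AddCommMonoid M] (g : Nat.Primes → M) (m n : ℕ+) :
    sumPrimeFactors g (m * n) = sumPrimeFactors g m + sumPrimeFactors g n := by
  rw [sumPrimeFactors, factorMultiset_mul]
  exact (congrArg Multiset.sum (Multiset.map_add _ _ _)).trans (Multiset.sum_add _ _)

theorem sumPrimeFactors_prime [AddCommMonoid M] (g : Nat.Primes → M) (p : Nat.Primes) :
    sumPrimeFactors g p = g p := by
  rw [sumPrimeFactors, factorMultiset_ofPrime]
  simp [PrimeMultiset.ofPrime]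

theorem eq_sumPrimeFactors [AddCancelCommMonoid M] {f : ℕ+ → M}
    (hf : ∀ m n, f (m * n) = f m + f n) (n : ℕ+) :
    f n = sumPrimeFactors (fun p => f p) n := by
  conv_lhs => rw [← prod_factorMultiset n]
  rw [PrimeMultiset.prod, map_multiset_prod_of_map_mul_eq_add hf]
  exact congrArg Multiset.sum (Multiset.map_map _ _ _)

theorem funext_of_map_mul_eq_add [AddCancelCommMonoid M] {f g : ℕ+ → M}
    (hf : ∀ m n, f (m * n) = f m + f n) (hg : ∀ m n, g (m * n) = g m + g n)
    (h : ∀ p : Nat.Primes, f p = g p) : f = g :=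
  funext fun n => by rw [eq_sumPrimeFactors hf, eq_sumPrimeFactors hg, funext h]

end PNat

noncomputable def equivDvdSubtype {α : Type*} [CommMonoidWithZero α] [IsLeftCancelMulZero α]
    {a : α} (ha : a ≠ 0) : α ≃ {x : α // a ∣ x} :=
  Equiv.ofBijective (fun y => ⟨a * y, dvd_mul_right a y⟩)
    ⟨fun _ _ h => mul_left_cancel₀ ha (congrArg Subtype.val h),
      fun ⟨_, y, hy⟩ => ⟨y, Subtype.ext hy.symm⟩⟩

abbrev LambdaDerivationInt : Type :=
  {f : ℕ+ → ℤ // (∀ p : ℕ+, (p : ℕ).Prime → ((p : ℕ) : ℤ) ∣ f p) ∧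
    ∀ m n : ℕ+, f (m * n) = f m + f n}

namespace LambdaDerivationInt

def restrictPrimes (f : LambdaDerivationInt) (p : {p : ℕ+ // (p : ℕ).Prime}) :
    {x : ℤ // ((p.1 : ℕ) : ℤ) ∣ x} :=
  ⟨f.1 p.1, f.2.1 p.1 p.2⟩

theorem restrictPrimes_injective : Function.Injective restrictPrimes := by
  intro f₁ f₂ h
  exact Subtype.ext <| PNat.funext_of_map_mul_eq_add f₁.2.2 f₂.2.2 fun p =>
    congrArg Subtype.val (congrFun h ⟨p, p.2⟩)

theorem restrictPrimes_surjective : Function.Surjective restrictPrimes := by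
  intro x
  let g : Nat.Primes → ℤ := fun p => x ⟨p, p.2⟩
  have hg (p : ℕ+) (hp : (p : ℕ).Prime) : PNat.sumPrimeFactors g p = x ⟨p, hp⟩ :=
    PNat.sumPrimeFactors_prime g ⟨p, hp⟩
  refine ⟨⟨PNat.sumPrimeFactors g, fun p hp => hg p hp ▸ (x ⟨p, hp⟩).2,
    PNat.sumPrimeFactors_mul g⟩, funext fun p => Subtype.ext (hg p.1 p.2)⟩

theorem restrictPrimes_bijective : Function.Bijective restrictPrimes :=
  ⟨restrictPrimes_injective, restrictPrimes_surjective⟩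

end LambdaDerivationInt

/-- for the λ-ring `ℤ` (all Adams operations equal the identity), every
λ-inner derivation is zero, and the group of λ-derivations — functions `f : ℕ⁺ → ℤ`
with `f(p) ∈ pℤ` for every prime `p` and `f(mn) = f(m) + f(n)` — maps bijectively onto
`∏_p pℤ` via `f ↦ (f(p))_p`.  Hence `H¹_λ(ℤ) ≅ ∏_p pℤ ≅ ∏_p ℤ`. -/
theorem H1_of_Z :
    (∀ (g : ℤ →+ ℤ) (n : ℕ+),
        (AddMonoidHom.id ℤ).comp g - g.comp (AddMonoidHom.id ℤ) = 0) ∧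
    Function.Bijective
      (fun (f : {f : ℕ+ → ℤ // (∀ p : ℕ+, (p : ℕ).Prime → ((p : ℕ) : ℤ) ∣ f p) ∧
          ∀ m n : ℕ+, f (m * n) = f m + f n})
        (p : {p : ℕ+ // (p : ℕ).Prime}) =>
        (⟨f.1 p.1, f.2.1 p.1 p.2⟩ : {x : ℤ // ((p.1 : ℕ) : ℤ) ∣ x})) ∧
    Nonempty ({f : ℕ+ → ℤ // (∀ p : ℕ+, (p : ℕ).Prime → ((p : ℕ) : ℤ) ∣ f p) ∧
          ∀ m n : ℕ+, f (m * n) = f m + f n}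
        ≃ ({p : ℕ+ // (p : ℕ).Prime} → ℤ)) := by
  refine ⟨fun g _ => sub_eq_zero.mpr rfl, LambdaDerivationInt.restrictPrimes_bijective, ?_⟩
  have hp (p : {p : ℕ+ // (p : ℕ).Prime}) : ((p.1 : ℕ) : ℤ) ≠ 0 := by exact_mod_cast p.1.ne_zero
  exact ⟨(Equiv.ofBijective _ LambdaDerivationInt.restrictPrimes_bijective).trans
    (Equiv.piCongrRight fun p => (equivDvdSubtype (hp p)).symm)⟩
end

section
/- If two deformations Ψ*_t and Ψ̄*_t of a λ-ring R are equivalent via a formal automorphism Φ_t = 1 + tφ₁ + t²φ₂ + ⋯ (each φᵢ an additive endomorphism satisfying the Frobenius congruence), meaning Ψ̄*_t = Φ_t⁻¹ Ψ*_t Φ_t, then the difference of infinitesimal deformations ψ̄*₁ − ψ*₁ equals the λ-inner derivation [ψ*, φ₁] : n ↦ ψⁿ ∘ φ₁ − φ₁ ∘ ψⁿ. Hence the cohomology class of the infinitesimal deformation in H¹_λ(R) depends only on the equivalence class of the deformation. -/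
open Finset

/-- The Adams operation `ψⁿ` regarded as a `ℤ`-linear (additive) endomorphism of `R`. -/
def adamsEnd {R : Type*} [CommRing R] (ψ : ℕ+ → R →+* R) (n : ℕ+) : AddMonoid.End R :=
  (ψ n).toAddMonoidHom

/-- if two deformations `Ψ*_t` and `Ψ̄*_t` of a λ-ring `R` are
equivalent via a formal automorphism `Φ_t = 1 + tφ₁ + t²φ₂ + ⋯` (i.e.
`Φ_t Ψ̄*_t = Ψ*_t Φ_t` coefficientwise), then
`ψ̄ⁿ₁ − ψⁿ₁ = ψⁿ ∘ φ₁ − φ₁ ∘ ψⁿ` for every `n`; that is, the difference of the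
infinitesimal deformations is the λ-inner derivation `[ψ*, φ₁]`. -/
theorem equivalent_deformations_infinitesimal {R : Type*} [CommRing R]
    (ψ : ℕ+ → R →+* R)
    (hψ1 : ψ 1 = RingHom.id R)
    (hψcomp : ∀ m n : ℕ+, (ψ m).comp (ψ n) = ψ (m * n))
    (hψfrob : ∀ p : ℕ+, (p : ℕ).Prime → ∀ r : R,
      ψ p r - r ^ (p : ℕ) ∈ Ideal.span {((p : ℕ) : R)})
    (Ψ Ψ' : ℕ → ℕ+ → AddMonoid.End R)
    (hΨ0 : ∀ n : ℕ+, Ψ 0 n = adamsEnd ψ n)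
    (hΨ'0 : ∀ n : ℕ+, Ψ' 0 n = adamsEnd ψ n)
    (hΨF1 : ∀ i : ℕ, 1 ≤ i → ∀ p : ℕ+, (p : ℕ).Prime → ∀ r : R,
      Ψ i p r ∈ Ideal.span {((p : ℕ) : R)})
    (hΨ'F1 : ∀ i : ℕ, 1 ≤ i → ∀ p : ℕ+, (p : ℕ).Prime → ∀ r : R,
      Ψ' i p r ∈ Ideal.span {((p : ℕ) : R)})
    (hdef : ∀ (i : ℕ) (m n : ℕ+),
      Ψ i (m * n) = ∑ j ∈ Finset.range (i + 1), Ψ j m * Ψ (i - j) n)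
    (hdef' : ∀ (i : ℕ) (m n : ℕ+),
      Ψ' i (m * n) = ∑ j ∈ Finset.range (i + 1), Ψ' j m * Ψ' (i - j) n)
    (φ : ℕ → AddMonoid.End R)
    (hφ0 : φ 0 = 1)
    (hφfrob : ∀ i : ℕ, 1 ≤ i → ∀ p : ℕ+, (p : ℕ).Prime → ∀ r : R,
      φ i r ^ (p : ℕ) - φ i (r ^ (p : ℕ)) ∈ Ideal.span {((p : ℕ) : R)})
    (hequiv : ∀ (i : ℕ) (n : ℕ+),
      ∑ j ∈ Finset.range (i + 1), φ j * Ψ' (i - j) n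
        = ∑ j ∈ Finset.range (i + 1), Ψ j n * φ (i - j)) :
    ∀ n : ℕ+, Ψ' 1 n - Ψ 1 n = adamsEnd ψ n * φ 1 - φ 1 * adamsEnd ψ n := by
  intro n
  have h := hequiv 1 n
  simp [Finset.sum_range_succ, hφ0, hΨ0, hΨ'0] at h
  rw [sub_eq_sub_iff_add_eq_add]
  exact h
end

section
/- Let Ψ*_t = ψ* + tψ*₁ + ⋯ + t^N ψ*_N be a deformation of order N of a λ-ring R (satisfying ψ^{mn}ᵢ = Σ_{j=0}^{i} ψᵐⱼ ∘ ψⁿ_{i−j} for 0 ≤ i ≤ N). Define Obs(Ψ*_t) : (ℕ⁺)² → End(R) by Obs(Ψ*_t)(m,n) = −Σ_{i=1}^{N} ψᵐᵢ ∘ ψⁿ_{N+1−i}. Then Obs(Ψ*_t) is a 2-cocycle: for all (m₀,m₁,m₂), ψ^{m₀} ∘ Obs(m₁,m₂) − Obs(m₀m₁,m₂) + Obs(m₀,m₁m₂) − Obs(m₀,m₁) ∘ ψ^{m₂} = 0. -/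
open Finset

/-- for a deformation of order `N` of a λ-ring `R`, the obstruction
`Obs(Ψ*_t)(m,n) = −Σ_{i=1}^{N} ψᵐᵢ ∘ ψⁿ_{N+1−i}` is a 2-cocycle:
`ψ^{m₀} ∘ Obs(m₁,m₂) − Obs(m₀m₁,m₂) + Obs(m₀,m₁m₂) − Obs(m₀,m₁) ∘ ψ^{m₂} = 0`. -/
theorem obstruction_is_two_cocycle {R : Type*} [CommRing R]
    (ψ : ℕ+ → R →+* R)
    (hψ1 : ψ 1 = RingHom.id R)
    (hψcomp : ∀ m n : ℕ+, (ψ m).comp (ψ n) = ψ (m * n))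
    (hψfrob : ∀ p : ℕ+, (p : ℕ).Prime → ∀ r : R,
      ψ p r - r ^ (p : ℕ) ∈ Ideal.span {((p : ℕ) : R)})
    (N : ℕ) (Ψ : ℕ → ℕ+ → AddMonoid.End R)
    (hΨ0 : ∀ n : ℕ+, Ψ 0 n = adamsEnd ψ n)
    (hΨF1 : ∀ i : ℕ, 1 ≤ i → i ≤ N → ∀ p : ℕ+, (p : ℕ).Prime → ∀ r : R,
      Ψ i p r ∈ Ideal.span {((p : ℕ) : R)})
    (hdef : ∀ i : ℕ, i ≤ N → ∀ m n : ℕ+,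
      Ψ i (m * n) = ∑ j ∈ Finset.range (i + 1), Ψ j m * Ψ (i - j) n) :
    ∀ m₀ m₁ m₂ : ℕ+,
      adamsEnd ψ m₀ * (-∑ i ∈ Finset.Icc 1 N, Ψ i m₁ * Ψ (N + 1 - i) m₂)
        - (-∑ i ∈ Finset.Icc 1 N, Ψ i (m₀ * m₁) * Ψ (N + 1 - i) m₂)
        + (-∑ i ∈ Finset.Icc 1 N, Ψ i m₀ * Ψ (N + 1 - i) (m₁ * m₂))
        - (-∑ i ∈ Finset.Icc 1 N, Ψ i m₀ * Ψ (N + 1 - i) m₁) * adamsEnd ψ m₂ = 0 := by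
  intro m₀ m₁ m₂
  -- B = A + T
  have hB : ∑ i ∈ Finset.Icc 1 N, Ψ i (m₀ * m₁) * Ψ (N + 1 - i) m₂
      = adamsEnd ψ m₀ * (∑ i ∈ Finset.Icc 1 N, Ψ i m₁ * Ψ (N + 1 - i) m₂)
        + ∑ i ∈ Finset.Icc 1 N, ∑ j ∈ Finset.Icc 1 i,
            Ψ j m₀ * (Ψ (i - j) m₁ * Ψ (N + 1 - i) m₂) := by
    rw [Finset.mul_sum, ← Finset.sum_add_distrib]
    refine Finset.sum_congr rfl fun i hi => ?_
    obtain ⟨hi1, hiN⟩ := Finset.mem_Icc.mp hi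
    rw [hdef i hiN m₀ m₁, Finset.sum_mul]
    have hins : Finset.range (i + 1) = insert 0 (Finset.Icc 1 i) := by
      ext x; simp [Finset.mem_Icc, Nat.lt_succ_iff]; omega
    rw [hins, Finset.sum_insert (by simp), hΨ0, Nat.sub_zero, mul_assoc]
    exact congrArg _ (Finset.sum_congr rfl fun j _ => mul_assoc _ _ _)
  -- C = T' + D
  have hC : ∑ i ∈ Finset.Icc 1 N, Ψ i m₀ * Ψ (N + 1 - i) (m₁ * m₂)
      = (∑ i ∈ Finset.Icc 1 N, ∑ k ∈ Finset.range (N + 1 - i),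
            Ψ i m₀ * (Ψ k m₁ * Ψ (N + 1 - i - k) m₂))
        + (∑ i ∈ Finset.Icc 1 N, Ψ i m₀ * Ψ (N + 1 - i) m₁) * adamsEnd ψ m₂ := by
    rw [Finset.sum_mul, ← Finset.sum_add_distrib]
    refine Finset.sum_congr rfl fun i hi => ?_
    obtain ⟨hi1, hiN⟩ := Finset.mem_Icc.mp hi
    have hle : N + 1 - i ≤ N := by omega
    rw [hdef (N + 1 - i) hle m₁ m₂, Finset.sum_range_succ, Nat.sub_self, hΨ0,
      mul_add, Finset.mul_sum, mul_assoc]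
  -- T = T'
  have hT : ∑ i ∈ Finset.Icc 1 N, ∑ j ∈ Finset.Icc 1 i,
        Ψ j m₀ * (Ψ (i - j) m₁ * Ψ (N + 1 - i) m₂)
      = ∑ i ∈ Finset.Icc 1 N, ∑ k ∈ Finset.range (N + 1 - i),
        Ψ i m₀ * (Ψ k m₁ * Ψ (N + 1 - i - k) m₂) := by
    rw [Finset.sum_sigma', Finset.sum_sigma']
    refine Finset.sum_nbij' (fun p => ⟨p.2, p.1 - p.2⟩) (fun p => ⟨p.1 + p.2, p.1⟩)
      ?_ ?_ ?_ ?_ ?_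
    · rintro ⟨i, j⟩ h
      simp only [Finset.mem_sigma, Finset.mem_Icc, Finset.mem_range] at h ⊢
      omega
    · rintro ⟨a, k⟩ h
      simp only [Finset.mem_sigma, Finset.mem_Icc, Finset.mem_range] at h ⊢
      omega
    · rintro ⟨i, j⟩ h
      simp only [Finset.mem_sigma, Finset.mem_Icc] at h
      simp only [Sigma.mk.inj_iff]
      constructor
      · omega
      · exact heq_of_eq (by omega)
    · rintro ⟨a, k⟩ h
      simp only [Finset.mem_sigma, Finset.mem_Icc, Finset.mem_range] at h
      simp only [Sigma.mk.inj_iff]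
      refine ⟨trivial, heq_of_eq (by omega)⟩
    · rintro ⟨i, j⟩ h
      simp only [Finset.mem_sigma, Finset.mem_Icc] at h
      have h1 : N + 1 - j - (i - j) = N + 1 - i := by omega
      simp only [h1]
  rw [hB, hC, hT]
  have hmn : ∀ a b : AddMonoid.End R, a * (-b) = -(a * b) := fun a b =>
    AddMonoidHom.ext fun r => by
      show a (-(b r)) = -(a (b r))
      exact map_neg a (b r)
  have hnm : ∀ a b : AddMonoid.End R, (-a) * b = -(a * b) := fun a b =>
    AddMonoidHom.ext fun r => rfl
  rw [hmn, hnm]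
  abel
end

section
/- Let Ψ*_t be a deformation of order N of a λ-ring R, and let ψ*_{N+1} ∈ F¹(R). Then Ψ*_t + t^{N+1}ψ*_{N+1} is a deformation of order N+1 if and only if d¹ψ*_{N+1} = Obs(Ψ*_t), i.e., for all m, n: ψᵐ ∘ ψⁿ_{N+1} − ψ^{mn}_{N+1} + ψᵐ_{N+1} ∘ ψⁿ = −Σ_{i=1}^{N} ψᵐᵢ ∘ ψⁿ_{N+1−i}. -/
open Finset

/-- a deformation `Ψ*_t` of order `N` extends, via an element
`ψ*_{N+1} ∈ F¹(R)`, to a deformation of order `N+1` if and only if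
`d¹ψ*_{N+1} = Obs(Ψ*_t)`, i.e. for all `m, n`:
`ψᵐ ∘ ψⁿ_{N+1} − ψ^{mn}_{N+1} + ψᵐ_{N+1} ∘ ψⁿ = −Σ_{i=1}^{N} ψᵐᵢ ∘ ψⁿ_{N+1−i}`. -/
theorem extension_iff_obstruction_coboundary {R : Type*} [CommRing R]
    (ψ : ℕ+ → R →+* R)
    (hψ1 : ψ 1 = RingHom.id R)
    (hψcomp : ∀ m n : ℕ+, (ψ m).comp (ψ n) = ψ (m * n))
    (hψfrob : ∀ p : ℕ+, (p : ℕ).Prime → ∀ r : R,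
      ψ p r - r ^ (p : ℕ) ∈ Ideal.span {((p : ℕ) : R)})
    (N : ℕ) (Ψ : ℕ → ℕ+ → AddMonoid.End R)
    (hΨ0 : ∀ n : ℕ+, Ψ 0 n = adamsEnd ψ n)
    (hΨF1 : ∀ i : ℕ, 1 ≤ i → i ≤ N → ∀ p : ℕ+, (p : ℕ).Prime → ∀ r : R,
      Ψ i p r ∈ Ideal.span {((p : ℕ) : R)})
    (hdef : ∀ i : ℕ, i ≤ N → ∀ m n : ℕ+,
      Ψ i (m * n) = ∑ j ∈ Finset.range (i + 1), Ψ j m * Ψ (i - j) n)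
    (ψnew : ℕ+ → AddMonoid.End R)
    (hψnewF1 : ∀ p : ℕ+, (p : ℕ).Prime → ∀ r : R,
      ψnew p r ∈ Ideal.span {((p : ℕ) : R)}) :
    -- the extended sequence is a deformation of order `N+1`
    (∀ i : ℕ, i ≤ N + 1 → ∀ m n : ℕ+,
        (fun j => if j = N + 1 then ψnew else Ψ j) i (m * n)
          = ∑ j ∈ Finset.range (i + 1),
              (fun j' => if j' = N + 1 then ψnew else Ψ j') j m
                * (fun j' => if j' = N + 1 then ψnew else Ψ j') (i - j) n)
      ↔
    -- `d¹ψ*_{N+1} = Obs(Ψ*_t)`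
    (∀ m n : ℕ+,
        adamsEnd ψ m * ψnew n - ψnew (m * n) + ψnew m * adamsEnd ψ n
          = -∑ i ∈ Finset.Icc 1 N, Ψ i m * Ψ (N + 1 - i) n) := by
  have key : ∀ m n : ℕ+,
      (∑ j ∈ Finset.range (N + 1 + 1),
          (if j = N + 1 then ψnew else Ψ j) m
            * (if N + 1 - j = N + 1 then ψnew else Ψ (N + 1 - j)) n)
        = adamsEnd ψ m * ψnew n
          + (∑ i ∈ Finset.Icc 1 N, Ψ i m * Ψ (N + 1 - i) n)
          + ψnew m * adamsEnd ψ n := by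
    intro m n
    rw [Finset.sum_range_succ, Finset.sum_range_succ']
    rw [if_pos rfl, if_neg (by omega : ¬ (0 : ℕ) = N + 1),
      if_pos (by omega : N + 1 - 0 = N + 1),
      if_neg (by omega : ¬ N + 1 - (N + 1) = N + 1)]
    have h1 : (∑ i ∈ Finset.range N,
        (if i + 1 = N + 1 then ψnew else Ψ (i + 1)) m
          * (if N + 1 - (i + 1) = N + 1 then ψnew else Ψ (N + 1 - (i + 1))) n)
        = ∑ i ∈ Finset.Icc 1 N, Ψ i m * Ψ (N + 1 - i) n := by
      rw [show Finset.Icc 1 N = Finset.Ico 1 (N + 1) by rw [Finset.Ico_add_one_right_eq_Icc],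
        Finset.sum_Ico_eq_sum_range]
      apply Finset.sum_congr (by norm_num)
      intro i hi
      rw [Finset.mem_range] at hi
      rw [if_neg (by omega), if_neg (by omega)]
      congr 2 <;> omega
    rw [h1, show N + 1 - (N + 1) = 0 by omega]
    simp only [hΨ0]
    abel
  constructor
  · intro h m n
    have h' := h (N + 1) le_rfl m n
    simp only [] at h'
    rw [if_pos trivial, key] at h'
    rw [h']
    abel
  · intro h i hi m n
    by_cases hcase : i = N + 1
    · subst hcase
      simp only []
      rw [if_pos trivial, key]
      have h' := h m n
      have : ψnew (m * n) = adamsEnd ψ m * ψnew n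
          - (adamsEnd ψ m * ψnew n - ψnew (m * n) + ψnew m * adamsEnd ψ n)
          + ψnew m * adamsEnd ψ n := by abel
      rw [this, h']
      abel
    · have hiN : i ≤ N := by omega
      simp only []
      rw [if_neg hcase]
      rw [hdef i hiN m n]
      apply Finset.sum_congr rfl
      intro j hj
      rw [Finset.mem_range] at hj
      rw [if_neg (by omega), if_neg (by omega)]
end

section
/- Let Ψ̄*_t and Ψ̃*_t be two order N+1 extensions of the same deformation Ψ*_t of order N of a λ-ring R. Then the difference ψ̄*_{N+1} − ψ̃*_{N+1} is a 1-cocycle in F¹(R): (ψ̄^{mn}_{N+1} − ψ̃^{mn}_{N+1}) = ψᵐ ∘ (ψ̄ⁿ_{N+1} − ψ̃ⁿ_{N+1}) + (ψ̄ᵐ_{N+1} − ψ̃ᵐ_{N+1}) ∘ ψⁿ for all m, n ≥ 1. -/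
open Finset

/-- if `ψ̄*_{N+1}` and `ψ̃*_{N+1}` are two order `N+1` extensions of the
same order-`N` deformation `Ψ*_t` of a λ-ring `R`, then their difference is a
1-cocycle in `F¹(R)`. -/
theorem difference_of_extensions_is_cocycle {R : Type*} [CommRing R]
    (ψ : ℕ+ → R →+* R)
    (hψ1 : ψ 1 = RingHom.id R)
    (hψcomp : ∀ m n : ℕ+, (ψ m).comp (ψ n) = ψ (m * n))
    (hψfrob : ∀ p : ℕ+, (p : ℕ).Prime → ∀ r : R,
      ψ p r - r ^ (p : ℕ) ∈ Ideal.span {((p : ℕ) : R)})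
    (N : ℕ) (Ψ : ℕ → ℕ+ → AddMonoid.End R)
    (hΨ0 : ∀ n : ℕ+, Ψ 0 n = adamsEnd ψ n)
    (hΨF1 : ∀ i : ℕ, 1 ≤ i → i ≤ N → ∀ p : ℕ+, (p : ℕ).Prime → ∀ r : R,
      Ψ i p r ∈ Ideal.span {((p : ℕ) : R)})
    (hdef : ∀ i : ℕ, i ≤ N → ∀ m n : ℕ+,
      Ψ i (m * n) = ∑ j ∈ Finset.range (i + 1), Ψ j m * Ψ (i - j) n)
    (ψbar ψtil : ℕ+ → AddMonoid.End R)
    (hbarF1 : ∀ p : ℕ+, (p : ℕ).Prime → ∀ r : R,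
      ψbar p r ∈ Ideal.span {((p : ℕ) : R)})
    (htilF1 : ∀ p : ℕ+, (p : ℕ).Prime → ∀ r : R,
      ψtil p r ∈ Ideal.span {((p : ℕ) : R)})
    -- both are order `N+1` extensions of `Ψ*_t`: the identity \eqref{eq:def2} at `i = N+1`
    (hbar : ∀ m n : ℕ+,
      ψbar (m * n) = adamsEnd ψ m * ψbar n + ψbar m * adamsEnd ψ n
        + ∑ i ∈ Finset.Icc 1 N, Ψ i m * Ψ (N + 1 - i) n)
    (htil : ∀ m n : ℕ+,
      ψtil (m * n) = adamsEnd ψ m * ψtil n + ψtil m * adamsEnd ψ n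
        + ∑ i ∈ Finset.Icc 1 N, Ψ i m * Ψ (N + 1 - i) n) :
    ∀ m n : ℕ+,
      ψbar (m * n) - ψtil (m * n)
        = adamsEnd ψ m * (ψbar n - ψtil n) + (ψbar m - ψtil m) * adamsEnd ψ n := by
  intro m n
  rw [hbar, htil, mul_sub, sub_mul]
  abel
end
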